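/- Let μ be a finite positive Borel measure on the unit circle T with infinite support, K_n its Christoffel kernel, w ∈ T, and ζ_{0n}, …, ζ_{nn} ∈ T the zeros of the para-orthogonal polynomial B_{n+1}(w,·). Define the discrete measure μ_n := Σ_{j=0}^n (1/K_n(ζ_{jn}, ζ_{jn})) δ_{ζ_{jn}}, where δ_ζ is the Dirac measure at ζ. Then for all polynomials p, q of degree at most n, ∫ p conj(q) dμ_n = ∫ p conj(q) dμ. -/

import Mathlib

open MeasureTheory Polynomial Filter
open scoped ComplexConjugate Topology

/-- The Christoffel kernel `K_n(w,z) = ∑_{j=0}^n conj(φ_j(w)) φ_j(z)`. -/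
noncomputable def christoffelK (φ : ℕ → Polynomial ℂ) (n : ℕ) (w z : ℂ) : ℂ :=
  ∑ j ∈ Finset.range (n + 1), conj ((φ j).eval w) * (φ j).eval z

/-- The para-orthogonal polynomial `B_{n+1}(w,z) = (1 − conj(w) z) K_n(w,z)`. -/
noncomputable def paraOrtho (φ : ℕ → Polynomial ℂ) (n : ℕ) (w z : ℂ) : ℂ :=
  (1 - conj w * z) * christoffelK φ n w z

/-- The discrete measure `μ_n = ∑_{j=0}^n (1/K_n(ζ_j,ζ_j)) δ_{ζ_j}`
(recall `K_n(ζ,ζ) = ∑_k |φ_k(ζ)|²` is a positive real number for `ζ ∈ T`). -/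
noncomputable def nodeMeasure (φ : ℕ → Polynomial ℂ) (n : ℕ) (ζ : Fin (n + 1) → ℂ) :
    Measure ℂ :=
  ∑ j : Fin (n + 1),
    ENNReal.ofReal (((christoffelK φ n (ζ j) (ζ j)).re)⁻¹) • Measure.dirac (ζ j)

/-!
For a node `ξ`, the polynomial `g_ξ = B_{n+1}(w,·)/(z - ξ)` has degree at most `n`, and on the
circle `(z - ξ) conj g_ξ(z) = -ξ (z - w) conj K_n(w,z)`. Hence, by the reproducing property of
`K_n`, `∫ f conj g_ξ dμ = 0` for every `f` of degree `≤ n` vanishing at `ξ`; subtracting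
`f(ξ) K_n(ξ,·)/K_n(ξ,ξ)` from a general `f` gives `∫ f conj g_ξ dμ = f(ξ) conj g_ξ(ξ)/K_n(ξ,ξ)`.
Since `g_{ζ_j}` vanishes at every node except `ζ_j`, these polynomials form a Lagrange basis of the
polynomials of degree `≤ n`; expanding `q` in it gives
`∫ p conj q dμ = ∑_j p(ζ_j) conj q(ζ_j)/K_n(ζ_j,ζ_j)`, which is the integral against `μ_n`.
-/

theorem Continuous.integrable_of_measure_compl_eq_zero {X E : Type*} [TopologicalSpace X]
    [T2Space X] [MeasurableSpace X] [OpensMeasurableSpace X] [NormedAddCommGroup E]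
    {μ : Measure X} [IsFiniteMeasure μ] {K : Set X} (hK : IsCompact K) (hμK : μ Kᶜ = 0)
    {f : X → E} (hf : Continuous f) : Integrable f μ := by
  rw [← Measure.restrict_eq_self_of_ae_mem (ae_iff.mpr hμK)]
  exact hf.continuousOn.integrableOn_compact hK

theorem integrable_eval_mul_conj_eval {μ : Measure ℂ} [IsFiniteMeasure μ]
    (hμT : μ (Metric.sphere (0 : ℂ) 1)ᶜ = 0) (p q : ℂ[X]) :
    Integrable (fun z ↦ p.eval z * conj (q.eval z)) μ :=
  (p.continuous.mul (Complex.continuous_conj.comp q.continuous)).integrable_of_measure_compl_eq_zero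
    (isCompact_sphere 0 1) hμT

theorem Complex.mul_conj_of_norm_eq_one {z : ℂ} (hz : ‖z‖ = 1) : z * conj z = 1 := by
  rw [Complex.mul_conj', hz, Complex.ofReal_one, one_pow]

theorem Complex.sub_mul_conj_of_norm_eq_one {z ξ : ℂ} (hz : ‖z‖ = 1) (hξ : ‖ξ‖ = 1) (y : ℂ) :
    (z - ξ) * conj y = -(z * ξ) * conj ((z - ξ) * y) := by
  simp only [map_mul, map_sub]
  linear_combination (ξ * conj y) * Complex.mul_conj_of_norm_eq_one hz -
    (z * conj y) * Complex.mul_conj_of_norm_eq_one hξ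

theorem Polynomial.degree_lt_natCast_add_one_iff {R : Type*} [Semiring R] {p : R[X]} {n : ℕ} :
    p.degree < ↑(n + 1) ↔ p.degree ≤ n := by
  rw [← mem_degreeLT, degreeLT_succ_eq_degreeLE, mem_degreeLE]

theorem Polynomial.eq_sum_smul_of_eval_eq_zero {F ι : Type*} [Field F] [Fintype ι]
    {v : ι → F} (hv : Function.Injective v) {g : ι → F[X]}
    (hg : ∀ i, (g i).degree < Fintype.card ι) (hgv : ∀ i j, i ≠ j → (g i).eval (v j) = 0)
    (hgi : ∀ i, (g i).eval (v i) ≠ 0) {f : F[X]} (hf : f.degree < Fintype.card ι) :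
    f = ∑ i, (f.eval (v i) / (g i).eval (v i)) • g i := by
  refine eq_of_degrees_lt_of_eval_index_eq Finset.univ hv.injOn hf ?_ fun j _ ↦ ?_
  · exact mem_degreeLT.mp <| Submodule.sum_mem _ fun i _ ↦
      Submodule.smul_mem _ _ (mem_degreeLT.mpr (hg i))
  · rw [eval_finsetSum, Finset.sum_eq_single j (fun i _ hij ↦ by rw [eval_smul, hgv i j hij,
      smul_zero]) (by simp), eval_smul, smul_eq_mul, div_mul_cancel₀ _ (hgi j)]

section Christoffel

variable (φ : ℕ → ℂ[X]) (n : ℕ)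

noncomputable def christoffelPoly (a : ℂ) : ℂ[X] :=
  ∑ k ∈ Finset.range (n + 1), conj ((φ k).eval a) • φ k

@[simp]
theorem eval_christoffelPoly (a z : ℂ) : (christoffelPoly φ n a).eval z = christoffelK φ n a z := by
  simp [christoffelPoly, christoffelK, eval_finsetSum]

variable {φ} in
theorem degree_christoffelPoly_le (hdeg : ∀ k, (φ k).degree = k) (a : ℂ) :
    (christoffelPoly φ n a).degree ≤ n := by
  refine (degree_sum_le _ _).trans (Finset.sup_le fun k hk ↦ ?_)
  refine (degree_smul_le _ _).trans ?_
  rw [hdeg k]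
  exact_mod_cast Finset.mem_range_succ_iff.mp hk

theorem christoffelK_self (a : ℂ) :
    christoffelK φ n a a
      = ((∑ k ∈ Finset.range (n + 1), Complex.normSq ((φ k).eval a) : ℝ) : ℂ) := by
  push_cast
  refine Finset.sum_congr rfl fun k _ ↦ ?_
  rw [mul_comm, Complex.mul_conj]

theorem christoffelK_self_re_nonneg (a : ℂ) : 0 ≤ (christoffelK φ n a a).re := by
  rw [christoffelK_self, Complex.ofReal_re]
  exact Finset.sum_nonneg fun k _ ↦ Complex.normSq_nonneg _

theorem ofReal_re_christoffelK_self (a : ℂ) :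
    ((christoffelK φ n a a).re : ℂ) = christoffelK φ n a a := by
  rw [christoffelK_self, Complex.ofReal_re]

variable {φ} in
theorem christoffelK_self_ne_zero (hdeg : ∀ k, (φ k).degree = k) (a : ℂ) :
    christoffelK φ n a a ≠ 0 := by
  have hφ0 : (φ 0).eval a ≠ 0 := by
    rw [eq_C_of_degree_eq_zero (hdeg 0), eval_C]
    exact coeff_ne_zero_of_eq_degree (hdeg 0)
  rw [christoffelK_self, Complex.ofReal_ne_zero]
  exact (Finset.sum_pos' (fun k _ ↦ Complex.normSq_nonneg ((φ k).eval a))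
    ⟨0, by simp, Complex.normSq_pos.mpr hφ0⟩).ne'

end Christoffel

section ParaOrthogonal

variable {φ : ℕ → ℂ[X]} {n : ℕ}

variable (φ n) in
noncomputable def paraOrthoPoly (w : ℂ) : ℂ[X] := (1 - C (conj w) * X) * christoffelPoly φ n w

@[simp]
theorem eval_paraOrthoPoly (w z : ℂ) : (paraOrthoPoly φ n w).eval z = paraOrtho φ n w z := by
  simp [paraOrthoPoly, paraOrtho]

theorem paraOrthoPoly_ne_zero (hdeg : ∀ k, (φ k).degree = k) (w : ℂ) :
    paraOrthoPoly φ n w ≠ 0 := by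
  refine mul_ne_zero (fun h ↦ by simpa using congr_arg (eval 0) h) fun h ↦ ?_
  exact christoffelK_self_ne_zero n hdeg w (by simpa using congr_arg (eval w) h)

theorem natDegree_paraOrthoPoly_le (hdeg : ∀ k, (φ k).degree = k) (w : ℂ) :
    (paraOrthoPoly φ n w).natDegree ≤ n + 1 := by
  refine (natDegree_mul_le).trans (add_comm n 1 ▸ add_le_add ?_ ?_)
  · exact (natDegree_sub_le _ _).trans
      (max_le (by simp) ((natDegree_C_mul_le _ _).trans natDegree_X_le))
  · exact natDegree_le_iff_degree_le.mpr (degree_christoffelPoly_le n hdeg w)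

variable (φ n) in
noncomputable def paraOrthoQuotient (w ξ : ℂ) : ℂ[X] := paraOrthoPoly φ n w /ₘ (X - C ξ)

theorem degree_paraOrthoQuotient_le (hdeg : ∀ k, (φ k).degree = k) (w ξ : ℂ) :
    (paraOrthoQuotient φ n w ξ).degree ≤ n := by
  refine degree_le_of_natDegree_le ?_
  rw [paraOrthoQuotient, natDegree_divByMonic _ (monic_X_sub_C ξ), natDegree_X_sub_C]
  have := natDegree_paraOrthoPoly_le (n := n) hdeg w
  omega

theorem X_sub_C_mul_paraOrthoQuotient {w ξ : ℂ} (hξ : paraOrtho φ n w ξ = 0) :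
    (X - C ξ) * paraOrthoQuotient φ n w ξ = paraOrthoPoly φ n w :=
  mul_divByMonic_eq_iff_isRoot.mpr (by simpa using hξ)

theorem sub_mul_eval_paraOrthoQuotient {w ξ : ℂ} (hξ : paraOrtho φ n w ξ = 0) (z : ℂ) :
    (z - ξ) * (paraOrthoQuotient φ n w ξ).eval z = paraOrtho φ n w z := by
  simpa using congr_arg (eval z) (X_sub_C_mul_paraOrthoQuotient hξ)

end ParaOrthogonal

section Quadrature

variable {μ : Measure ℂ} [IsFiniteMeasure μ] {φ : ℕ → ℂ[X]} {n : ℕ} {w ξ : ℂ}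

theorem integral_eval_mul_conj_christoffelK
    (hμT : μ (Metric.sphere (0 : ℂ) 1)ᶜ = 0) (hdeg : ∀ k, (φ k).degree = k)
    (horth : ∀ k m, ∫ z, (φ k).eval z * conj ((φ m).eval z) ∂μ = if k = m then 1 else 0)
    {f : ℂ[X]} (hf : f.degree ≤ n) (a : ℂ) :
    ∫ z, f.eval z * conj (christoffelK φ n a z) ∂μ = f.eval a := by
  have hspan : f ∈ Submodule.span ℂ (φ '' Set.Iic n) := by
    let S : Polynomial.Sequence ℂ := ⟨φ, hdeg⟩
    rw [S.span_degreeLE fun k _ ↦ (leadingCoeff_ne_zero.mpr (S.ne_zero k)).isUnit, mem_degreeLE]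
    exact hf
  clear hf
  simp_rw [← eval_christoffelPoly]
  induction hspan using Submodule.span_induction with
  | mem f hf =>
    obtain ⟨k, hk, rfl⟩ := hf
    simp only [christoffelPoly, eval_finsetSum, eval_smul, smul_eq_mul, map_sum, map_mul,
      Complex.conj_conj, Finset.mul_sum, mul_left_comm ((φ k).eval _)]
    rw [integral_finsetSum _ fun j _ ↦ (integrable_eval_mul_conj_eval hμT _ _).const_mul _]
    simp only [integral_const_mul, horth, mul_ite, mul_one, mul_zero, Finset.sum_ite_eq]
    simp [Nat.lt_succ_of_le hk]
  | zero => simp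
  | add f g _ _ hf hg =>
    simp only [eval_add, add_mul]
    rw [integral_add (integrable_eval_mul_conj_eval hμT _ _)
      (integrable_eval_mul_conj_eval hμT _ _), hf, hg]
  | smul c f _ hf =>
    simp only [eval_smul, smul_eq_mul, mul_assoc]
    rw [integral_const_mul, hf]

theorem eval_mul_conj_eval_paraOrthoQuotient (hξ : ‖ξ‖ = 1) (hBξ : paraOrtho φ n w ξ = 0)
    {z : ℂ} (hz : ‖z‖ = 1) (h : ℂ[X]) :
    ((X - C ξ) * h).eval z * conj ((paraOrthoQuotient φ n w ξ).eval z)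
      = -ξ * (((X - C w) * h).eval z * conj (christoffelK φ n w z)) := by
  simp only [eval_mul, eval_sub, eval_X, eval_C]
  rw [mul_comm (z - ξ), mul_assoc, Complex.sub_mul_conj_of_norm_eq_one hz hξ,
    sub_mul_eval_paraOrthoQuotient hBξ, paraOrtho, map_mul, map_sub, map_one, map_mul,
    Complex.conj_conj]
  linear_combination (ξ * w * h.eval z * conj (christoffelK φ n w z)) *
    Complex.mul_conj_of_norm_eq_one hz

theorem integral_eval_mul_conj_paraOrthoQuotient_of_isRoot
    (hμT : μ (Metric.sphere (0 : ℂ) 1)ᶜ = 0) (hdeg : ∀ k, (φ k).degree = k)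
    (horth : ∀ k m, ∫ z, (φ k).eval z * conj ((φ m).eval z) ∂μ = if k = m then 1 else 0)
    (hξ : ‖ξ‖ = 1) (hBξ : paraOrtho φ n w ξ = 0) {f : ℂ[X]} (hf : f.degree ≤ n)
    (hfξ : f.IsRoot ξ) :
    ∫ z, f.eval z * conj ((paraOrthoQuotient φ n w ξ).eval z) ∂μ = 0 := by
  set h := f /ₘ (X - C ξ)
  have hfh : (X - C ξ) * h = f := mul_divByMonic_eq_iff_isRoot.mpr hfξ
  have hwh : ((X - C w) * h).degree ≤ (n : WithBot ℕ) := by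
    rwa [degree_mul, degree_X_sub_C, ← degree_X_sub_C ξ, ← degree_mul, hfh]
  have hae : ∀ᵐ z ∂μ, f.eval z * conj ((paraOrthoQuotient φ n w ξ).eval z)
      = -ξ * (((X - C w) * h).eval z * conj (christoffelK φ n w z)) := by
    filter_upwards [ae_iff.mpr hμT] with z hz
    rw [← hfh]
    exact eval_mul_conj_eval_paraOrthoQuotient hξ hBξ (mem_sphere_zero_iff_norm.mp hz) h
  rw [integral_congr_ae hae, integral_const_mul,
    integral_eval_mul_conj_christoffelK hμT hdeg horth hwh]
  simp

theorem integral_eval_mul_conj_paraOrthoQuotient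
    (hμT : μ (Metric.sphere (0 : ℂ) 1)ᶜ = 0) (hdeg : ∀ k, (φ k).degree = k)
    (horth : ∀ k m, ∫ z, (φ k).eval z * conj ((φ m).eval z) ∂μ = if k = m then 1 else 0)
    (hξ : ‖ξ‖ = 1) (hBξ : paraOrtho φ n w ξ = 0) {f : ℂ[X]} (hf : f.degree ≤ n) :
    ∫ z, f.eval z * conj ((paraOrthoQuotient φ n w ξ).eval z) ∂μ
      = f.eval ξ * conj ((paraOrthoQuotient φ n w ξ).eval ξ) / christoffelK φ n ξ ξ := by
  set g := paraOrthoQuotient φ n w ξ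
  set c := f.eval ξ / christoffelK φ n ξ ξ
  set r := f - c • christoffelPoly φ n ξ
  have hr : r.degree ≤ n :=
    (degree_sub_le _ _).trans (max_le hf ((degree_smul_le _ _).trans
      (degree_christoffelPoly_le n hdeg ξ)))
  have hrξ : r.IsRoot ξ := by
    simp [r, c, div_mul_cancel₀ _ (christoffelK_self_ne_zero n hdeg ξ)]
  have hKg : ∫ z, (christoffelPoly φ n ξ).eval z * conj (g.eval z) ∂μ = conj (g.eval ξ) := by
    rw [← integral_eval_mul_conj_christoffelK hμT hdeg horth
      (degree_paraOrthoQuotient_le hdeg w ξ), ← integral_conj]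
    simp only [eval_christoffelPoly, map_mul, Complex.conj_conj, mul_comm, g]
  calc ∫ z, f.eval z * conj (g.eval z) ∂μ
      = ∫ z, r.eval z * conj (g.eval z)
          + c * ((christoffelPoly φ n ξ).eval z * conj (g.eval z)) ∂μ := by
        refine integral_congr_ae (ae_of_all _ fun z ↦ ?_)
        simp only [r, eval_sub, eval_smul, smul_eq_mul]
        ring
    _ = c * conj (g.eval ξ) := by
        rw [integral_add (integrable_eval_mul_conj_eval hμT _ _)
          ((integrable_eval_mul_conj_eval hμT _ _).const_mul c),
          integral_eval_mul_conj_paraOrthoQuotient_of_isRoot hμT hdeg horth hξ hBξ hr hrξ,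
          integral_const_mul, hKg, zero_add]
    _ = f.eval ξ * conj (g.eval ξ) / christoffelK φ n ξ ξ := div_mul_eq_mul_div _ _ _

end Quadrature

section Nodes

variable {φ : ℕ → ℂ[X]} {n : ℕ} {w : ℂ} {ζ : Fin (n + 1) → ℂ}

theorem eval_paraOrthoQuotient_eq_zero (hζinj : Function.Injective ζ)
    (hζ0 : ∀ j, paraOrtho φ n w (ζ j) = 0) {i j : Fin (n + 1)} (hij : i ≠ j) :
    (paraOrthoQuotient φ n w (ζ i)).eval (ζ j) = 0 := by
  have h := sub_mul_eval_paraOrthoQuotient (hζ0 i) (ζ j)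
  rw [hζ0 j, mul_eq_zero, sub_eq_zero] at h
  exact h.resolve_left fun h ↦ hij (hζinj h).symm

theorem eval_paraOrthoQuotient_ne_zero (hdeg : ∀ k, (φ k).degree = k)
    (hζinj : Function.Injective ζ) (hζ0 : ∀ j, paraOrtho φ n w (ζ j) = 0) (i : Fin (n + 1)) :
    (paraOrthoQuotient φ n w (ζ i)).eval (ζ i) ≠ 0 := by
  intro hi
  have hzero : paraOrthoQuotient φ n w (ζ i) = 0 := by
    refine eq_zero_of_degree_lt_of_eval_index_eq_zero Finset.univ hζinj.injOn ?_ fun j _ ↦ ?_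
    · rw [Finset.card_univ, Fintype.card_fin, degree_lt_natCast_add_one_iff]
      exact degree_paraOrthoQuotient_le hdeg w (ζ i)
    · rcases eq_or_ne i j with rfl | hij
      exacts [hi, eval_paraOrthoQuotient_eq_zero hζinj hζ0 hij]
  apply paraOrthoPoly_ne_zero hdeg w
  rw [← X_sub_C_mul_paraOrthoQuotient (hζ0 i), hzero, mul_zero]

theorem integral_eval_mul_conj_eval_eq_sum_nodes {μ : Measure ℂ} [IsFiniteMeasure μ]
    (hμT : μ (Metric.sphere (0 : ℂ) 1)ᶜ = 0) (hdeg : ∀ k, (φ k).degree = k)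
    (horth : ∀ k m, ∫ z, (φ k).eval z * conj ((φ m).eval z) ∂μ = if k = m then 1 else 0)
    (hζT : ∀ j, ‖ζ j‖ = 1) (hζinj : Function.Injective ζ)
    (hζ0 : ∀ j, paraOrtho φ n w (ζ j) = 0) {p q : ℂ[X]} (hp : p.degree ≤ n)
    (hq : q.degree ≤ n) :
    ∫ z, p.eval z * conj (q.eval z) ∂μ
      = ∑ j, p.eval (ζ j) * conj (q.eval (ζ j)) / christoffelK φ n (ζ j) (ζ j) := by
  set g := fun j ↦ paraOrthoQuotient φ n w (ζ j)
  have hgζ : ∀ j, (g j).eval (ζ j) ≠ 0 := eval_paraOrthoQuotient_ne_zero hdeg hζinj hζ0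
  have hq_interp : q = ∑ j, (q.eval (ζ j) / (g j).eval (ζ j)) • g j :=
    eq_sum_smul_of_eval_eq_zero hζinj
      (fun j ↦ by
        rw [Fintype.card_fin, degree_lt_natCast_add_one_iff]
        exact degree_paraOrthoQuotient_le hdeg w (ζ j))
      (fun i j hij ↦ eval_paraOrthoQuotient_eq_zero hζinj hζ0 hij) hgζ
      (by rwa [Fintype.card_fin, degree_lt_natCast_add_one_iff])
  calc ∫ z, p.eval z * conj (q.eval z) ∂μ
      = ∑ j, conj (q.eval (ζ j) / (g j).eval (ζ j)) * ∫ z, p.eval z * conj ((g j).eval z) ∂μ := by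
        conv_lhs => rw [hq_interp]
        simp only [eval_finsetSum, eval_smul, smul_eq_mul, map_sum, map_mul, Finset.mul_sum,
          mul_left_comm (p.eval _)]
        rw [integral_finsetSum _ fun j _ ↦ (integrable_eval_mul_conj_eval hμT _ _).const_mul _]
        simp only [integral_const_mul]
    _ = ∑ j, p.eval (ζ j) * conj (q.eval (ζ j)) / christoffelK φ n (ζ j) (ζ j) := by
        refine Finset.sum_congr rfl fun j _ ↦ ?_
        rw [integral_eval_mul_conj_paraOrthoQuotient hμT hdeg horth (hζT j) (hζ0 j) hp, map_div₀]
        field_simp [(map_ne_zero (starRingEnd ℂ)).mpr (hgζ j)]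
        ring

end Nodes

theorem integral_nodeMeasure (φ : ℕ → ℂ[X]) (n : ℕ) (ζ : Fin (n + 1) → ℂ) (f : ℂ → ℂ) :
    ∫ z, f z ∂(nodeMeasure φ n ζ) = ∑ j, ((christoffelK φ n (ζ j) (ζ j)).re)⁻¹ • f (ζ j) := by
  rw [nodeMeasure, integral_finsetSum_measure fun j _ ↦
    (integrable_dirac enorm_lt_top).smul_measure ENNReal.ofReal_ne_top]
  refine Finset.sum_congr rfl fun j _ ↦ ?_
  rw [integral_smul_measure, integral_dirac,
    ENNReal.toReal_ofReal (inv_nonneg.mpr (christoffelK_self_re_nonneg φ n (ζ j)))]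

theorem nodeMeasure_quadrature_general
    (μ : Measure ℂ) [IsFiniteMeasure μ]
    (hμT : μ (Metric.sphere (0 : ℂ) 1)ᶜ = 0)
    (φ : ℕ → Polynomial ℂ)
    (hdeg : ∀ k, (φ k).degree = (k : ℕ))
    (horth : ∀ k m, ∫ z, (φ k).eval z * conj ((φ m).eval z) ∂μ
        = if k = m then 1 else 0)
    (n : ℕ) (w : ℂ)
    (ζ : Fin (n + 1) → ℂ)
    (hζT : ∀ j, ζ j ∈ Metric.sphere (0 : ℂ) 1)
    (hζinj : Function.Injective ζ)
    (hζ0 : ∀ j, paraOrtho φ n w (ζ j) = 0)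
    (p q : Polynomial ℂ) (hp : p.degree ≤ n) (hq : q.degree ≤ n) :
    ∫ z, p.eval z * conj (q.eval z) ∂(nodeMeasure φ n ζ)
      = ∫ z, p.eval z * conj (q.eval z) ∂μ := by
  rw [integral_nodeMeasure, integral_eval_mul_conj_eval_eq_sum_nodes hμT hdeg horth
    (fun j ↦ mem_sphere_zero_iff_norm.mp (hζT j)) hζinj hζ0 hp hq]
  refine Finset.sum_congr rfl fun j _ ↦ ?_
  rw [Complex.real_smul, Complex.ofReal_inv, ofReal_re_christoffelK_self, div_eq_inv_mul]

/-- **Quadrature identity.** For all polynomials `p, q` of degree at most `n`,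
`∫ p conj(q) dμ_n = ∫ p conj(q) dμ`, where `μ_n` is the discrete measure supported on the
zeros `ζ_{0n},…,ζ_{nn} ∈ T` of the para-orthogonal polynomial `B_{n+1}(w,·)` with weights
`1/K_n(ζ_{jn},ζ_{jn})`. -/
theorem nodeMeasure_quadrature
    (μ : Measure ℂ) [IsFiniteMeasure μ]
    (hμT : μ (Metric.sphere (0 : ℂ) 1)ᶜ = 0)
    (hμinf : ∀ s : Finset ℂ, μ ((s : Set ℂ)ᶜ) ≠ 0)
    (φ : ℕ → Polynomial ℂ)
    (hdeg : ∀ k, (φ k).degree = (k : ℕ))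
    (hlead : ∀ k, 0 < ((φ k).leadingCoeff).re ∧ ((φ k).leadingCoeff).im = 0)
    (horth : ∀ k m, ∫ z, (φ k).eval z * conj ((φ m).eval z) ∂μ
        = if k = m then 1 else 0)
    (n : ℕ) (w : ℂ) (hw : w ∈ Metric.sphere (0 : ℂ) 1)
    (ζ : Fin (n + 1) → ℂ)
    (hζT : ∀ j, ζ j ∈ Metric.sphere (0 : ℂ) 1)
    (hζinj : Function.Injective ζ)
    (hζ0 : ∀ j, paraOrtho φ n w (ζ j) = 0)
    (p q : Polynomial ℂ) (hp : p.degree ≤ n) (hq : q.degree ≤ n) :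
    ∫ z, p.eval z * conj (q.eval z) ∂(nodeMeasure φ n ζ)
      = ∫ z, p.eval z * conj (q.eval z) ∂μ :=
  nodeMeasure_quadrature_general μ hμT φ hdeg horth n w ζ hζT hζinj hζ0 p q hp hq
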